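/- For every natural number i > 0, ∫_0^{1/(3^i-1)} f(t) dt = (2^(i-1) / 9^i) · ((3^i + 1) / (3^i - 1)) · (1 / (1 + 2^(i-1)/9^i)). -/

import Mathlib

open intervalIntegral Set

/-! The primitive `G x = ∫₀ˣ f` inherits the self-affinity of `f`: under `x ↦ x/3`, `x ↦ (2-x)/3`
and `x ↦ (2+x)/3` it transforms affinely in `(x, G x)`, the constant `G (2/3) = 5/18` being forced
by evaluating at `x = 1`. The point `a = 1/(3^i - 1)` satisfies `3^i a = 1 + a`, so with
`b = (1+a)/3` one has `a = b/3^(i-1)`, `b = (2-(1-a))/3`, `1 - b = (2-a)/3`, and `1 - a` arises from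
`1 - b` by `i - 1` applications of `x ↦ (2+x)/3`. Following these orbits gives a linear system in
`G a` whose solution is the stated value. -/

theorem apply_div_pow_of_apply_div {φ : ℝ → ℝ} {r s : ℝ} (hs : 1 ≤ s)
    (h : ∀ y ∈ Icc (0:ℝ) 1, φ (y / s) = r * φ y) (n : ℕ) :
    ∀ y ∈ Icc (0:ℝ) 1, φ (y / s ^ n) = r ^ n * φ y := by
  induction n with
  | zero => simp
  | succ n ih =>
    intro y hy
    have hys : y / s ∈ Icc (0:ℝ) 1 :=
      ⟨div_nonneg hy.1 (by linarith), (div_le_one₀ (by linarith)).2 (hy.2.trans hs)⟩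
    rw [pow_succ, mul_comm (s ^ n), ← div_div, ih _ hys, h y hy, pow_succ]
    ring

theorem integral_add_mul_of_apply_add_mul {f : ℝ → ℝ} (hf : ContinuousOn f (Icc 0 1))
    {p c α β x : ℝ} (hp : p ∈ Icc (0:ℝ) 1) (hx : x ∈ Icc (0:ℝ) 1)
    (hpx : p + c * x ∈ Icc (0:ℝ) 1) (h : ∀ t ∈ Icc (0:ℝ) 1, f (p + c * t) = α + β * f t) :
    ∫ t in 0..p + c * x, f t = (∫ t in 0..p, f t) + c * (α * x + β * ∫ t in 0..x, f t) := by
  have hint : ∀ u ∈ Icc (0:ℝ) 1, ∀ v ∈ Icc (0:ℝ) 1, IntervalIntegrable f MeasureTheory.volume u v :=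
    fun u hu v hv => (hf.mono (uIcc_subset_Icc hu hv)).intervalIntegrable
  have hzero : (0:ℝ) ∈ Icc (0:ℝ) 1 := ⟨le_rfl, zero_le_one⟩
  have hsub : c * ∫ t in 0..x, f (p + c * t) = ∫ t in p..p + c * x, f t := by
    simpa only [mul_zero, add_zero, smul_eq_mul] using
      smul_integral_comp_add_mul f c p (a := 0) (b := x)
  have hrhs : ∫ t in 0..x, f (p + c * t) = α * x + β * ∫ t in 0..x, f t := by
    rw [integral_congr fun t ht => h t (uIcc_subset_Icc hzero hx ht),
      integral_add intervalIntegrable_const ((hint 0 hzero x hx).const_mul β),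
      integral_const, integral_const_mul, sub_zero, smul_eq_mul, mul_comm x]
  rw [← integral_add_adjacent_intervals (hint 0 hzero p hp) (hint p hp _ hpx), ← hsub, hrhs]

theorem integral_div_three {f : ℝ → ℝ} (hf : ContinuousOn f (Icc 0 1))
    (hw1 : ∀ x ∈ Icc (0:ℝ) 1, f (x / 3) = (2/3) * f x) {x : ℝ} (hx : x ∈ Icc (0:ℝ) 1) :
    ∫ t in 0..x / 3, f t = 2/9 * ∫ t in 0..x, f t := by
  have h := integral_add_mul_of_apply_add_mul hf (p := 0) (c := 1/3) (α := 0) (β := 2/3)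
    ⟨le_rfl, zero_le_one⟩ hx ⟨by linarith [hx.1], by linarith [hx.2]⟩
    fun t ht => by rw [zero_add, zero_add, one_div_mul_eq_div]; exact hw1 t ht
  rw [zero_add, one_div_mul_eq_div] at h
  rw [h, integral_same]
  ring

theorem integral_two_sub_div_three {f : ℝ → ℝ} (hf : ContinuousOn f (Icc 0 1))
    (hw2 : ∀ x ∈ Icc (0:ℝ) 1, f ((2 - x) / 3) = (1/3) * (1 + f x)) {x : ℝ}
    (hx : x ∈ Icc (0:ℝ) 1) :
    ∫ t in 0..(2 - x) / 3, f t = (∫ t in 0..2/3, f t) - x / 9 - (∫ t in 0..x, f t) / 9 := by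
  have hrw : ∀ t : ℝ, 2/3 + -(1/3) * t = (2 - t) / 3 := fun t => by ring
  have h := integral_add_mul_of_apply_add_mul hf (p := 2/3) (c := -(1/3)) (α := 1/3) (β := 1/3)
    (x := x) ⟨by norm_num, by norm_num⟩ hx
    (by rw [hrw]; exact ⟨by linarith [hx.2], by linarith [hx.1]⟩)
    fun t ht => by rw [hrw, hw2 t ht]; ring
  rw [hrw] at h
  rw [h]
  ring

theorem integral_two_add_div_three {f : ℝ → ℝ} (hf : ContinuousOn f (Icc 0 1))
    (hw3 : ∀ x ∈ Icc (0:ℝ) 1, f ((2 + x) / 3) = 1/3 + (2/3) * f x) {x : ℝ}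
    (hx : x ∈ Icc (0:ℝ) 1) :
    ∫ t in 0..(2 + x) / 3, f t = (∫ t in 0..2/3, f t) + x / 9 + 2/9 * ∫ t in 0..x, f t := by
  have hrw : ∀ t : ℝ, 2/3 + 1/3 * t = (2 + t) / 3 := fun t => by ring
  have h := integral_add_mul_of_apply_add_mul hf (p := 2/3) (c := 1/3) (α := 1/3) (β := 2/3)
    (x := x) ⟨by norm_num, by norm_num⟩ hx
    (by rw [hrw]; exact ⟨by linarith [hx.1], by linarith [hx.2]⟩)
    fun t ht => by rw [hrw, hw3 t ht]
  rw [hrw] at h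
  rw [h]
  ring

theorem integral_zero_two_thirds {f : ℝ → ℝ} (hf : ContinuousOn f (Icc 0 1))
    (hw1 : ∀ x ∈ Icc (0:ℝ) 1, f (x / 3) = (2/3) * f x)
    (hw2 : ∀ x ∈ Icc (0:ℝ) 1, f ((2 - x) / 3) = (1/3) * (1 + f x))
    (hw3 : ∀ x ∈ Icc (0:ℝ) 1, f ((2 + x) / 3) = 1/3 + (2/3) * f x) :
    ∫ t in 0..2/3, f t = 5/18 := by
  have hone : (1:ℝ) ∈ Icc (0:ℝ) 1 := ⟨zero_le_one, le_rfl⟩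
  have h1 := integral_div_three hf hw1 hone
  have h2 := integral_two_sub_div_three hf hw2 hone
  have h3 := integral_two_add_div_three hf hw3 hone
  norm_num at h1 h2 h3
  linarith

theorem one_half_sub_sub_apply_one_sub_div_pow {G : ℝ → ℝ}
    (h3 : ∀ x ∈ Icc (0:ℝ) 1, G ((2 + x) / 3) = 5/18 + x / 9 + 2/9 * G x) (n : ℕ) :
    ∀ y ∈ Icc (0:ℝ) 1,
      1/2 - y / 3 ^ n - G (1 - y / 3 ^ n) = (2/9) ^ n * (1/2 - y - G (1 - y)) := by
  refine apply_div_pow_of_apply_div (φ := fun y => 1/2 - y - G (1 - y)) (by norm_num) ?_ n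
  intro y hy
  rw [show 1 - y / 3 = (2 + (1 - y)) / 3 by ring, h3 _ ⟨by linarith [hy.2], by linarith [hy.1]⟩]
  ring

theorem apply_one_div_three_pow_sub_one {G : ℝ → ℝ}
    (h1 : ∀ x ∈ Icc (0:ℝ) 1, G (x / 3) = 2/9 * G x)
    (h2 : ∀ x ∈ Icc (0:ℝ) 1, G ((2 - x) / 3) = 5/18 - x / 9 - G x / 9)
    (h3 : ∀ x ∈ Icc (0:ℝ) 1, G ((2 + x) / 3) = 5/18 + x / 9 + 2/9 * G x) (n : ℕ) :
    G (1 / (3 ^ (n + 1) - 1)) =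
      (2 ^ n / 9 ^ (n + 1)) * ((3 ^ (n + 1) + 1) / (3 ^ (n + 1) - 1)) *
        (1 / (1 + 2 ^ n / 9 ^ (n + 1))) := by
  have hpow : (3:ℝ) ≤ 3 ^ (n + 1) := le_self_pow₀ (by norm_num) (by omega)
  have hd : (3:ℝ) ^ (n + 1) - 1 ≠ 0 := by linarith
  set a : ℝ := 1 / (3 ^ (n + 1) - 1) with ha_def
  set b : ℝ := (1 + a) / 3 with hb_def
  have ha : a ∈ Icc (0:ℝ) 1 := by
    constructor
    · exact div_nonneg zero_le_one (by linarith)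
    · rw [div_le_one₀] <;> linarith
  have hb : b ∈ Icc (0:ℝ) 1 := ⟨by linarith [ha.1], by linarith [ha.2]⟩
  have mem_one_sub : ∀ y ∈ Icc (0:ℝ) 1, 1 - y ∈ Icc (0:ℝ) 1 :=
    fun y hy => ⟨by linarith [hy.2], by linarith [hy.1]⟩
  have hab : b / 3 ^ n = a := by
    rw [hb_def, ha_def]
    field_simp
    ring
  set q : ℝ := (2/9) ^ n with hq_def
  have e1 : G a = q * G b := by
    rw [← hab, apply_div_pow_of_apply_div (by norm_num) h1 n b hb]
  have e2 : G b = 5/18 - (1 - a) / 9 - G (1 - a) / 9 := by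
    rw [hb_def, show (1 + a) / 3 = (2 - (1 - a)) / 3 by ring, h2 _ (mem_one_sub a ha)]
  have e3 : 1/2 - a - G (1 - a) = q * (1/2 - b - G (1 - b)) := by
    simpa only [hab] using one_half_sub_sub_apply_one_sub_div_pow h3 n b hb
  have e4 : G (1 - b) = 5/18 - a / 9 - G a / 9 := by
    rw [hb_def, show 1 - (1 + a) / 3 = (2 - a) / 3 by ring, h2 a ha]
  have hq : q ≤ 1 := pow_le_one₀ (by norm_num) (by norm_num)
  have key : (1 - q/9) * ((1 + q/9) * G a - q/9 * (1 + 2 * a)) = 0 := by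
    linear_combination e1 + q * e2 + (q/9) * e3 - (q^2/9) * e4
  have hGa : (1 + q/9) * G a = q/9 * (1 + 2 * a) := by
    have : 1 - q/9 ≠ 0 := by linarith
    linarith [(mul_eq_zero.1 key).resolve_left this]
  have hq9 : (2:ℝ) ^ n / 9 ^ (n + 1) = q/9 := by rw [hq_def, div_pow, pow_succ]; ring
  have hquot : ((3:ℝ) ^ (n + 1) + 1) / (3 ^ (n + 1) - 1) = 1 + 2 * a := by
    rw [ha_def]
    field_simp
    ring
  have hpos : 0 < 1 + q/9 := by positivity
  rw [hq9, hquot, eq_comm, mul_one_div, div_eq_iff hpos.ne', ← hGa]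
  ring

theorem bourbaki_stmt_general (f : ℝ → ℝ)
    (hcont : ContinuousOn f (Set.Icc 0 1))
    (hw1 : ∀ x ∈ Set.Icc (0:ℝ) 1, f (x / 3) = (2/3) * f x)
    (hw2 : ∀ x ∈ Set.Icc (0:ℝ) 1, f ((2 - x) / 3) = (1/3) * (1 + f x))
    (hw3 : ∀ x ∈ Set.Icc (0:ℝ) 1, f ((2 + x) / 3) = 1/3 + (2/3) * f x) :
    ∀ i : ℕ, 0 < i → ∫ t in (0:ℝ)..(1 / (3 ^ i - 1)), f t = (2 ^ (i - 1) / 9 ^ i) * ((3 ^ i + 1) / (3 ^ i - 1)) * (1 / (1 + 2 ^ (i - 1) / 9 ^ i)) := by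
  intro i hi
  obtain ⟨n, rfl⟩ : ∃ n, i = n + 1 := ⟨i - 1, by omega⟩
  have h23 := integral_zero_two_thirds hcont hw1 hw2 hw3
  rw [Nat.add_sub_cancel]
  exact apply_one_div_three_pow_sub_one (G := fun x => ∫ t in (0:ℝ)..x, f t)
    (fun x hx => integral_div_three hcont hw1 hx)
    (fun x hx => by rw [integral_two_sub_div_three hcont hw2 hx, h23])
    (fun x hx => by rw [integral_two_add_div_three hcont hw3 hx, h23]) n

theorem bourbaki_stmt (f : ℝ → ℝ)
    (hcont : ContinuousOn f (Set.Icc 0 1))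
    (h0 : f 0 = 0) (h1 : f 1 = 1)
    (hw1 : ∀ x ∈ Set.Icc (0:ℝ) 1, f (x / 3) = (2/3) * f x)
    (hw2 : ∀ x ∈ Set.Icc (0:ℝ) 1, f ((2 - x) / 3) = (1/3) * (1 + f x))
    (hw3 : ∀ x ∈ Set.Icc (0:ℝ) 1, f ((2 + x) / 3) = 1/3 + (2/3) * f x) :
    ∀ i : ℕ, 0 < i → ∫ t in (0:ℝ)..(1 / (3 ^ i - 1)), f t = (2 ^ (i - 1) / 9 ^ i) * ((3 ^ i + 1) / (3 ^ i - 1)) * (1 / (1 + 2 ^ (i - 1) / 9 ^ i)) :=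
  bourbaki_stmt_general f hcont hw1 hw2 hw3
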